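/- Let D be a bounded proper subdomain of ℂ, let a ∈ ℂ \ D, and let γ be a closed rectifiable curve in D whose winding number around a is nonzero (so that γ is a non-trivial closed curve surrounding a hole of D containing a). Then ∫_γ m_D(z)|dz| ≥ 2π. -/

import Mathlib

open Metric Set

variable {E : Type*} [NormedAddCommGroup E] [NormedSpace ℝ E]

/-- δ_D(z): the Euclidean distance from `z` to the boundary `∂D`. -/
noncomputable def bdist (D : Set E) (z : E) : ℝ := Metric.infDist z (frontier D)

/-- The m-density `m_D(z) = d(D) / (δ_D(z)·(d(D) − δ_D(z)))`. -/
noncomputable def mDensity (D : Set E) (z : E) : ℝ :=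
  Metric.diam D / (bdist D z * (Metric.diam D - bdist D z))

/-- A rectifiable path in `D` from `x` to `y`, modeled as a Lipschitz map on `[0,1]`. -/
def IsRectPathIn (D : Set E) (x y : E) (γ : ℝ → E) : Prop :=
  (∃ K : NNReal, LipschitzWith K γ) ∧ γ 0 = x ∧ γ 1 = y ∧ ∀ t ∈ Set.Icc (0:ℝ) 1, γ t ∈ D

/-- The line integral `∫_γ ρ(z) |dz|` of a density `ρ` along a path `γ`. -/
noncomputable def pathIntegral (ρ : E → ℝ) (γ : ℝ → E) : ℝ :=
  ∫ t in (0:ℝ)..1, ρ (γ t) * ‖deriv γ t‖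

/-- `inf_γ ∫_γ ρ(z)|dz|` over all rectifiable paths `γ` joining `x` and `y` in `D`. -/
noncomputable def pathDist (ρ : E → ℝ) (D : Set E) (x y : E) : ℝ :=
  sInf (pathIntegral ρ '' {γ | IsRectPathIn D x y γ})

/-- The metric `m_D`. -/
noncomputable def mDist (D : Set E) (x y : E) : ℝ := pathDist (mDensity D) D x y

/-- The quasihyperbolic metric `k_D`. -/
noncomputable def kDist (D : Set E) (x y : E) : ℝ :=
  pathDist (fun z => 1 / bdist D z) D x y

/-- The winding number (index) of a closed rectifiable curve `γ` (parametrized on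
`[0,1]`) around a point `a`, given by `(1/(2πi)) ∫_γ dz/(z − a)`. -/
noncomputable def windingNumber (γ : ℝ → ℂ) (a : ℂ) : ℂ :=
  (2 * Real.pi * Complex.I)⁻¹ * ∫ t in (0:ℝ)..1, deriv γ t / (γ t - a)

/-!
For `z ∈ D` and `a ∉ D` the nearest boundary point gives `δ_D(z) ≤ |z - a|`, and the ball of
radius `δ_D(z)` about `z` lies in `D`, so `δ_D(z) ≤ d(D)/2`; hence `m_D(z) ≥ 1/δ_D(z) ≥ 1/|z - a|`
and the m-length of `γ` dominates `∫_γ |dz|/|z - a| ≥ |I|` with `I = ∫_γ dz/(z - a)`.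
Along a Lipschitz curve avoiding `a`, `(γ(t) - a) · exp(-∫₀ᵗ γ'/(γ - a))` is absolutely
continuous with derivative zero almost everywhere, hence constant; as `γ` is closed this gives
`exp I = 1`, so `I ∈ 2πiℤ`, and `I ≠ 0` because the winding number is nonzero. Thus `|I| ≥ 2π`.
-/

open MeasureTheory
open scoped NNReal

section BoundaryDistance

variable [FiniteDimensional ℝ E] {D : Set E} {z : E}

theorem bdist_le_infDist_compl (hz : z ∈ D) (hD : D ≠ univ) :
    bdist D z ≤ infDist z Dᶜ := by
  obtain ⟨y, hy, hdist⟩ := exists_mem_frontier_infDist_compl_eq_dist hz hD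
  exact hdist ▸ infDist_le_dist_of_mem hy

theorem bdist_le_dist_of_notMem (hz : z ∈ D) {w : E} (hw : w ∉ D) : bdist D z ≤ dist z w :=
  (bdist_le_infDist_compl hz ((ne_univ_iff_exists_notMem D).2 ⟨w, hw⟩)).trans
    (infDist_le_dist_of_mem hw)

theorem IsOpen.bdist_eq_infDist_compl (hDo : IsOpen D) (hz : z ∈ D) (hD : D ≠ univ) :
    bdist D z = infDist z Dᶜ := by
  obtain ⟨y, hy, -⟩ := exists_mem_frontier_infDist_compl_eq_dist hz hD
  refine (bdist_le_infDist_compl hz hD).antisymm ?_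
  exact infDist_le_infDist_of_subset (hDo.frontier_eq ▸ fun _ hx => hx.2) ⟨y, hy⟩

theorem IsOpen.bdist_pos (hDo : IsOpen D) (hz : z ∈ D) (hD : D ≠ univ) : 0 < bdist D z := by
  rw [hDo.bdist_eq_infDist_compl hz hD, ← infDist_pos_iff_notMem_closure
    (nonempty_compl.2 hD), hDo.isClosed_compl.closure_eq, notMem_compl_iff]
  exact hz

theorem IsOpen.ball_bdist_subset (hDo : IsOpen D) (hz : z ∈ D) (hD : D ≠ univ) :
    ball z (bdist D z) ⊆ D := by
  simpa [hDo.bdist_eq_infDist_compl hz hD] using ball_infDist_subset_compl (x := z) (s := Dᶜ)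

theorem IsOpen.two_mul_bdist_le_diam [Nontrivial E] (hDo : IsOpen D) (hDb : Bornology.IsBounded D)
    (hz : z ∈ D) (hD : D ≠ univ) : 2 * bdist D z ≤ diam D := by
  rw [← diam_ball_eq z (hDo.bdist_pos hz hD).le]
  exact diam_mono (hDo.ball_bdist_subset hz hD) hDb

theorem IsOpen.inv_bdist_le_mDensity [Nontrivial E] (hDo : IsOpen D)
    (hDb : Bornology.IsBounded D) (hz : z ∈ D) (hD : D ≠ univ) :
    (bdist D z)⁻¹ ≤ mDensity D z := by
  have hpos := hDo.bdist_pos hz hD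
  have hdiam := hDo.two_mul_bdist_le_diam hDb hz hD
  rw [mDensity, inv_eq_one_div, div_le_div_iff₀ hpos (by nlinarith)]
  nlinarith

theorem IsOpen.inv_dist_le_mDensity [Nontrivial E] (hDo : IsOpen D)
    (hDb : Bornology.IsBounded D) (hz : z ∈ D) {w : E} (hw : w ∉ D) :
    (dist z w)⁻¹ ≤ mDensity D z := by
  have hD : D ≠ univ := (ne_univ_iff_exists_notMem D).2 ⟨w, hw⟩
  exact (inv_anti₀ (hDo.bdist_pos hz hD) (bdist_le_dist_of_notMem hz hw)).trans
    (hDo.inv_bdist_le_mDensity hDb hz hD)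

theorem IsOpen.continuousOn_mDensity [Nontrivial E] (hDo : IsOpen D)
    (hDb : Bornology.IsBounded D) (hD : D ≠ univ) : ContinuousOn (mDensity D) D := by
  have hbdist : Continuous (bdist D) := continuous_infDist_pt _
  refine continuousOn_const.div (hbdist.mul (continuous_const.sub hbdist)).continuousOn
    fun z hz => ?_
  have hpos := hDo.bdist_pos hz hD
  have hdiam := hDo.two_mul_bdist_le_diam hDb hz hD
  exact mul_ne_zero hpos.ne' (by linarith)

end BoundaryDistance

section LogDeriv

theorem LipschitzWith.intervalIntegrable_deriv [CompleteSpace E] {f : ℝ → E} {K : ℝ≥0}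
    (hf : LipschitzWith K f) (a b : ℝ) : IntervalIntegrable (deriv f) volume a b :=
  intervalIntegrable_const.mono_fun' (aestronglyMeasurable_deriv f _)
    (ae_of_all _ fun _ => norm_deriv_le_of_lipschitz hf)

theorem IntervalIntegrable.lipschitzOnWith_integral {g : ℝ → E} {a b : ℝ} {C : ℝ≥0}
    (hg : IntervalIntegrable g volume a b) (hC : ∀ x ∈ uIcc a b, ‖g x‖ ≤ C) :
    LipschitzOnWith C (fun x => ∫ t in a..x, g t) (uIcc a b) := by
  refine LipschitzOnWith.of_dist_le_mul fun x hx y hy => ?_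
  rw [dist_eq_norm, intervalIntegral.integral_interval_sub_left
    (hg.mono_set (uIcc_subset_uIcc left_mem_uIcc hx))
    (hg.mono_set (uIcc_subset_uIcc left_mem_uIcc hy)), Real.dist_eq]
  exact intervalIntegral.norm_integral_le_of_norm_le_const fun t ht =>
    hC t (uIcc_subset_uIcc hy hx (uIoc_subset_uIcc ht))

theorem Complex.lipschitzOnWith_exp_closedBall (R : ℝ) :
    LipschitzOnWith (Real.toNNReal (Real.exp R)) Complex.exp (closedBall 0 R) := by
  refine (convex_closedBall 0 R).lipschitzOnWith_of_nnnorm_hasDerivWithin_le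
    (fun z _ => (Complex.hasDerivAt_exp z).hasDerivWithinAt) fun z hz => ?_
  rw [← NNReal.coe_le_coe, coe_nnnorm, Real.coe_toNNReal _ (Real.exp_pos R).le]
  exact (Complex.norm_exp_le_exp_norm z).trans
    (Real.exp_le_exp.2 (by simpa using mem_closedBall.1 hz))

theorem LipschitzWith.exists_norm_logDeriv_le {f : ℝ → ℂ} {K : ℝ≥0} (hf : LipschitzWith K f)
    {a b : ℝ} (hf0 : ∀ x ∈ uIcc a b, f x ≠ 0) :
    ∃ C : ℝ≥0, ∀ x ∈ uIcc a b, ‖logDeriv f x‖ ≤ C := by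
  obtain ⟨x₀, hx₀, hmin⟩ := isCompact_uIcc.exists_isMinOn nonempty_uIcc
    (hf.continuous.norm.continuousOn (s := uIcc a b))
  have hpos : 0 < ‖f x₀‖ := norm_pos_iff.2 (hf0 x₀ hx₀)
  refine ⟨K / ‖f x₀‖₊, fun x hx => ?_⟩
  rw [logDeriv_apply, norm_div, NNReal.coe_div, coe_nnnorm]
  exact div_le_div₀ K.2 (norm_deriv_le_of_lipschitz hf) hpos (hmin hx)

theorem LipschitzWith.intervalIntegrable_logDeriv {f : ℝ → ℂ} {K : ℝ≥0}
    (hf : LipschitzWith K f) {a b : ℝ} (hf0 : ∀ x ∈ uIcc a b, f x ≠ 0) :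
    IntervalIntegrable (logDeriv f) volume a b := by
  convert (hf.intervalIntegrable_deriv a b).mul_continuousOn
    (hf.continuous.continuousOn.inv₀ hf0) using 1
  ext x
  rw [logDeriv_apply, div_eq_mul_inv, Pi.inv_apply]

theorem LipschitzWith.mul_exp_integral_logDeriv {f : ℝ → ℂ} {K : ℝ≥0} (hf : LipschitzWith K f)
    {a b : ℝ} (hf0 : ∀ x ∈ uIcc a b, f x ≠ 0) :
    f a * Complex.exp (∫ x in a..b, logDeriv f x) = f b := by
  obtain ⟨C, hbound⟩ := hf.exists_norm_logDeriv_le hf0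
  have hint := hf.intervalIntegrable_logDeriv hf0
  set Φ := fun x => ∫ t in a..x, logDeriv f t
  have hΦ : LipschitzOnWith C Φ (uIcc a b) := hint.lipschitzOnWith_integral hbound
  have hΦ_mem : MapsTo (fun x => -Φ x) (uIcc a b) (closedBall 0 (C * dist a b)) := fun x hx => by
    rw [mem_closedBall, dist_zero_right, norm_neg, ← dist_zero_right,
      ← intervalIntegral.integral_same (a := a) (f := logDeriv f)]
    exact (hΦ.dist_le_mul x hx a left_mem_uIcc).trans
      (by rw [dist_comm]; gcongr; exact Real.dist_left_le_of_mem_uIcc hx)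
  have hexp := (Complex.lipschitzOnWith_exp_closedBall _).comp hΦ.neg hΦ_mem
  have hG : AbsolutelyContinuousOnInterval (fun x => f x * Complex.exp (-Φ x)) a b :=
    hf.lipschitzOnWith.absolutelyContinuousOnInterval.smul hexp.absolutelyContinuousOnInterval
  have hG' : ∀ᵐ x, x ∈ uIcc a b → HasDerivAt (fun x => f x * Complex.exp (-Φ x)) 0 x := by
    filter_upwards [hf.ae_differentiableAt, hint.ae_hasDerivAt_integral] with x hfx hΦx hx
    refine (hfx.hasDerivAt.mul (hΦx hx a left_mem_uIcc).neg.cexp).congr_deriv ?_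
    rw [logDeriv_apply]
    field_simp [hf0 x hx]
    ring
  obtain ⟨c, hc⟩ := hG.const_of_ae_hasDerivAt_zero hG'
  have := (hc a left_mem_uIcc).trans (hc b right_mem_uIcc).symm
  simp only [Φ, intervalIntegral.integral_same, neg_zero, Complex.exp_zero, mul_one] at this
  rw [this, mul_assoc, ← Complex.exp_add, neg_add_cancel, Complex.exp_zero, mul_one]

theorem LipschitzWith.exp_integral_deriv_div_sub_eq_one {γ : ℝ → ℂ} {K : ℝ≥0}
    (hγ : LipschitzWith K γ) (hclosed : γ 0 = γ 1) {a : ℂ}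
    (ha : ∀ t ∈ Icc (0 : ℝ) 1, γ t ≠ a) :
    Complex.exp (∫ t in (0 : ℝ)..1, deriv γ t / (γ t - a)) = 1 := by
  have hf : LipschitzWith (K + 0) (fun t => γ t - a) := hγ.sub (LipschitzWith.const a)
  have h := hf.mul_exp_integral_logDeriv (a := 0) (b := 1) fun t ht =>
    sub_ne_zero.2 (ha t (by rwa [uIcc_of_le zero_le_one] at ht))
  simp only [logDeriv_apply, deriv_sub_const, ← hclosed] at h
  exact (mul_eq_left₀ (sub_ne_zero.2 (ha 0 (left_mem_Icc.2 zero_le_one)))).1 h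

end LogDeriv

theorem Complex.two_pi_le_norm_of_exp_eq_one {z : ℂ} (h : Complex.exp z = 1) (hz : z ≠ 0) :
    2 * Real.pi ≤ ‖z‖ := by
  obtain ⟨n, rfl⟩ := Complex.exp_eq_one_iff.1 h
  have hn : (1 : ℝ) ≤ |(n : ℝ)| := by
    exact_mod_cast Int.one_le_abs (by rintro rfl; simp at hz)
  rw [norm_mul, Complex.norm_intCast, norm_mul, norm_mul, Complex.norm_I, Complex.norm_real,
    Complex.norm_ofNat, Real.norm_of_nonneg Real.pi_pos.le, mul_one]
  nlinarith [Real.pi_pos]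

theorem mLength_nontrivial_closed_curve_general (D : Set ℂ)
    (hDopen : IsOpen D)
    (hDbdd : Bornology.IsBounded D) (hDproper : D ≠ Set.univ)
    (a : ℂ) (ha : a ∉ D)
    (γ : ℝ → ℂ) (hγlip : ∃ K : NNReal, LipschitzWith K γ)
    (hγclosed : γ 0 = γ 1) (hγin : ∀ t ∈ Set.Icc (0:ℝ) 1, γ t ∈ D)
    (hwind : windingNumber γ a ≠ 0) :
    2 * Real.pi ≤ pathIntegral (mDensity D) γ := by
  obtain ⟨K, hK⟩ := hγlip
  have hγa : ∀ t ∈ Icc (0 : ℝ) 1, γ t ≠ a := fun t ht h => ha (h ▸ hγin t ht)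
  have hI := Complex.two_pi_le_norm_of_exp_eq_one
    (hK.exp_integral_deriv_div_sub_eq_one hγclosed hγa)
    fun h => hwind (by rw [windingNumber, h, mul_zero])
  have hint : IntervalIntegrable (fun t => mDensity D (γ t) * ‖deriv γ t‖) volume 0 1 :=
    (hK.intervalIntegrable_deriv 0 1).norm.continuousOn_mul <|
      (hDopen.continuousOn_mDensity hDbdd hDproper).comp hK.continuous.continuousOn
        fun t ht => hγin t (by rwa [uIcc_of_le zero_le_one] at ht)
  refine hI.trans (intervalIntegral.norm_integral_le_of_norm_le zero_le_one
    (ae_of_all _ fun t ht => ?_) hint)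
  rw [norm_div, div_eq_inv_mul, ← dist_eq_norm]
  gcongr
  exact hDopen.inv_dist_le_mDensity hDbdd (hγin t (Ioc_subset_Icc_self ht)) ha

/-- Proposition: minimal $m_D$-length of non-trivial closed curves.
If $D ⊂ ℂ$ is a bounded proper subdomain, $a ∈ ℂ \setminus D$, and $γ$ is a closed
rectifiable curve in $D$ with nonzero winding number around $a$, then
$∫_γ m_D(z)|dz| ≥ 2π$. -/
theorem mLength_nontrivial_closed_curve (D : Set ℂ)
    (hDopen : IsOpen D) (hDconn : IsConnected D)
    (hDbdd : Bornology.IsBounded D) (hDproper : D ≠ Set.univ)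
    (a : ℂ) (ha : a ∉ D)
    (γ : ℝ → ℂ) (hγlip : ∃ K : NNReal, LipschitzWith K γ)
    (hγclosed : γ 0 = γ 1) (hγin : ∀ t ∈ Set.Icc (0:ℝ) 1, γ t ∈ D)
    (hwind : windingNumber γ a ≠ 0) :
    2 * Real.pi ≤ pathIntegral (mDensity D) γ :=
  mLength_nontrivial_closed_curve_general D hDopen hDbdd hDproper a ha γ hγlip hγclosed hγin hwind
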